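/- Let L ≥ 2, m ≥ 1, r ≥ 1, and K ≥ 1 be integers, set N = 2^L·m, and let n_b^(2), …, n_b^(L) and n_b^(ad) be nonnegative integers all bounded by a nonnegative integer n_b. Then the total number of weight parameters of the convolutional multiscale neural network, N_{p,CNN}^MNN = Σ_{ℓ=2}^{L} ( r·(N/2^ℓ) + K·r²·(2·n_b^(ℓ)+1) + r·(N/2^ℓ) ) + K·m²·(2·n_b^(ad)+1), satisfies N_{p,CNN}^MNN ≤ r·N + (r²·log₂(N) + m²)·(2·n_b+1)·K. -/

import Mathlib

/-!
The restriction and interpolation layers at level `ℓ` contribute `2r⌊N/2^ℓ⌋`, and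
`Σ_{ℓ ≥ 2} 2⌊N/2^ℓ⌋ ≤ Σ_{ℓ ≥ 1} ⌊N/2^ℓ⌋ ≤ N`, giving the term `rN`. Each of the at most `L`
levels contributes at most `K r² (2n_b+1)` kernel weights, and `L ≤ log₂ (2^L m)` as `m ≥ 1`.
-/

open Finset

theorem sum_range_div_two_pow_succ_le (N L : ℕ) : ∑ l ∈ range L, N / 2 ^ (l + 1) ≤ N := by
  induction L generalizing N with
  | zero => simp
  | succ L ih =>
    have hshift : ∑ l ∈ range L, N / 2 ^ (l + 1 + 1) = ∑ l ∈ range L, N / 2 / 2 ^ (l + 1) := by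
      simp only [Nat.div_div_eq_div_mul, ← pow_succ']
    rw [sum_range_succ', hshift]
    have := ih (N / 2)
    omega

theorem sum_Icc_two_mul_div_two_pow_le (N L : ℕ) : ∑ l ∈ Icc 2 L, 2 * (N / 2 ^ l) ≤ N :=
  calc ∑ l ∈ Icc 2 L, 2 * (N / 2 ^ l)
      = ∑ l ∈ range (L + 1 - 2), 2 * (N / 2 ^ (l + 1) / 2) := by
        rw [← Ico_add_one_right_eq_Icc, sum_Ico_eq_sum_range]
        simp only [Nat.div_div_eq_div_mul, ← pow_succ, add_comm 2, add_assoc]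
    _ ≤ ∑ l ∈ range (L + 1 - 2), N / 2 ^ (l + 1) := by
        gcongr with l
        exact Nat.mul_div_le _ _
    _ ≤ N := sum_range_div_two_pow_succ_le N _
theorem sum_Icc_le_mul_of_le (L c : ℕ) (f : ℕ → ℕ) (hf : ∀ l ∈ Icc 2 L, f l ≤ c) :
    ∑ l ∈ Icc 2 L, f l ≤ L * c :=
  calc ∑ l ∈ Icc 2 L, f l ≤ #(Icc 2 L) * c := sum_le_card_nsmul _ _ _ hf
    _ ≤ L * c := by gcongr; simp only [Nat.card_Icc]; omega

theorem mnn_param_count_le (N L m r K : ℕ) (nb : ℕ → ℕ) (nbad nbmax : ℕ)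
    (hnb : ∀ l, 2 ≤ l → l ≤ L → nb l ≤ nbmax) (hnbad : nbad ≤ nbmax) :
    (∑ l ∈ Icc 2 L, (r * (N / 2 ^ l) + K * r ^ 2 * (2 * nb l + 1) + r * (N / 2 ^ l)))
        + K * m ^ 2 * (2 * nbad + 1)
      ≤ r * N + (r ^ 2 * L + m ^ 2) * (2 * nbmax + 1) * K := by
  have hsplit : ∑ l ∈ Icc 2 L, (r * (N / 2 ^ l) + K * r ^ 2 * (2 * nb l + 1) + r * (N / 2 ^ l))
      = r * ∑ l ∈ Icc 2 L, 2 * (N / 2 ^ l) + ∑ l ∈ Icc 2 L, K * r ^ 2 * (2 * nb l + 1) := by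
    rw [mul_sum, ← sum_add_distrib]
    exact sum_congr rfl fun l _ ↦ by ring
  have hrestrict : r * ∑ l ∈ Icc 2 L, 2 * (N / 2 ^ l) ≤ r * N :=
    Nat.mul_le_mul_left r (sum_Icc_two_mul_div_two_pow_le N L)
  have hkernel : ∑ l ∈ Icc 2 L, K * r ^ 2 * (2 * nb l + 1) ≤ L * (K * r ^ 2 * (2 * nbmax + 1)) :=
    sum_Icc_le_mul_of_le L _ _ fun l hl ↦ by
      have := hnb l (mem_Icc.mp hl).1 (mem_Icc.mp hl).2
      gcongr
  have hadjacent : K * m ^ 2 * (2 * nbad + 1) ≤ K * m ^ 2 * (2 * nbmax + 1) := by gcongr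
  calc _ ≤ r * N + L * (K * r ^ 2 * (2 * nbmax + 1)) + K * m ^ 2 * (2 * nbmax + 1) := by
        rw [hsplit]; gcongr
    _ = r * N + (r ^ 2 * L + m ^ 2) * (2 * nbmax + 1) * K := by ring

theorem natCast_le_logb_two_pow_mul (L m : ℕ) (hm : 1 ≤ m) :
    (L : ℝ) ≤ Real.logb 2 ((2 ^ L * m : ℕ) : ℝ) := by
  rw [Real.le_logb_iff_rpow_le one_lt_two (by positivity), Real.rpow_natCast]
  push_cast
  exact le_mul_of_one_le_right (by positivity) (by exact_mod_cast hm)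

theorem stmt_10_general (L m r K : ℕ) (hm : 1 ≤ m)
    (N : ℕ) (hN : N = 2 ^ L * m)
    (nb : ℕ → ℕ) (nbad nbmax : ℕ)
    (hnb : ∀ l, 2 ≤ l → l ≤ L → nb l ≤ nbmax) (hnbad : nbad ≤ nbmax)
    (Np : ℕ)
    (hNp : Np = (∑ l ∈ Finset.Icc 2 L,
        (r * (N / 2 ^ l) + K * r ^ 2 * (2 * nb l + 1) + r * (N / 2 ^ l)))
      + K * m ^ 2 * (2 * nbad + 1)) :
    (Np : ℝ) ≤ r * N + (r ^ 2 * Real.logb 2 N + m ^ 2) * (2 * nbmax + 1) * K := by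
  have hcount : (Np : ℝ) ≤ r * N + (r ^ 2 * L + m ^ 2) * (2 * nbmax + 1) * K := by
    exact_mod_cast hNp ▸ mnn_param_count_le N L m r K nb nbad nbmax hnb hnbad
  have hlog : (L : ℝ) ≤ Real.logb 2 N := hN ▸ natCast_le_logb_two_pow_mul L m hm
  calc (Np : ℝ) ≤ _ := hcount
    _ ≤ _ := by gcongr

/-- Parameter count of the convolutional multiscale neural network:
`N_{p,CNN}^MNN = Σ_{ℓ=2}^{L} (r·(N/2^ℓ) + K·r²·(2n_b^(ℓ)+1) + r·(N/2^ℓ)) + K·m²·(2n_b^(ad)+1)`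
satisfies `N_{p,CNN}^MNN ≤ rN + (r²·log₂(N) + m²)·(2n_b+1)·K`. -/
theorem stmt_10 (L m r K : ℕ) (hL : 2 ≤ L) (hm : 1 ≤ m) (hr : 1 ≤ r) (hK : 1 ≤ K)
    (N : ℕ) (hN : N = 2 ^ L * m)
    (nb : ℕ → ℕ) (nbad nbmax : ℕ)
    (hnb : ∀ l, 2 ≤ l → l ≤ L → nb l ≤ nbmax) (hnbad : nbad ≤ nbmax)
    (Np : ℕ)
    (hNp : Np = (∑ l ∈ Finset.Icc 2 L,
        (r * (N / 2 ^ l) + K * r ^ 2 * (2 * nb l + 1) + r * (N / 2 ^ l)))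
      + K * m ^ 2 * (2 * nbad + 1)) :
    (Np : ℝ) ≤ r * N + (r ^ 2 * Real.logb 2 N + m ^ 2) * (2 * nbmax + 1) * K :=
  stmt_10_general L m r K hm N hN nb nbad nbmax hnb hnbad Np hNp
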